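/- Define Φ : (0,∞)³ → ℝ⁶ by Φ(a,b,c) := ( (1, a+c, bc)/(1+a+c+bc), (ab, b, 1)/(ab+b+1) ) (each triple scaled to have coordinate sum 1). Then Φ is injective, and its image equals exactly the set {(v₁,v₂,v₃,w₁,w₂,w₃) ∈ ℝ⁶ : v₁+v₂+v₃ = 1, w₁+w₂+w₃ = 1, v₁w₁ − v₂w₂ + v₃w₃ = 0, and v₁,v₂,v₃,w₁,w₂,w₃ > 0}. -/

import Mathlib

/-!
The unnormalized vectors are recovered from `Φ(a, b, c)` up to scale, and their coordinate
ratios give back the parameters: `a = w₁/w₂`, `b = w₂/w₃` and `c = v₃w₃/(v₁w₂)`. Conversely these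
formulas invert `Φ` on the positive points of the two simplices satisfying the incidence relation
`v₁w₁ - v₂w₂ + v₃w₃ = 0`, which is exactly what makes `a + c = v₂/v₁`.
-/

/-- The parametrization of the totally positive part of the complete flag variety of
`SL₃(ℝ)`: `Φ(a, b, c)` records the vector `(1, a + c, bc)` normalized to coordinate sum
`1`, followed by the vector `(ab, b, 1)` normalized to coordinate sum `1`. -/
noncomputable def tpFlagParam (a b c : ℝ) : EuclideanSpace ℝ (Fin 6) :=
  WithLp.toLp 2 ![1 / (1 + (a + c) + b * c), (a + c) / (1 + (a + c) + b * c), b * c / (1 + (a + c) + b * c),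
    a * b / (a * b + b + 1), b / (a * b + b + 1), 1 / (a * b + b + 1)]

def totallyPositiveFlags : Set (EuclideanSpace ℝ (Fin 6)) :=
  {x | x 0 + x 1 + x 2 = 1 ∧ x 3 + x 4 + x 5 = 1 ∧
    x 0 * x 3 - x 1 * x 4 + x 2 * x 5 = 0 ∧ ∀ i, 0 < x i}

noncomputable def tpFlagCoords (x : EuclideanSpace ℝ (Fin 6)) : ℝ × ℝ × ℝ :=
  (x 3 / x 4, x 4 / x 5, x 2 * x 5 / (x 0 * x 4))

theorem tpFlagParam_mem_totallyPositiveFlags {a b c : ℝ} (ha : 0 < a) (hb : 0 < b) (hc : 0 < c) :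
    tpFlagParam a b c ∈ totallyPositiveFlags := by
  have hD : 1 + (a + c) + b * c ≠ 0 := by positivity
  have hE : a * b + b + 1 ≠ 0 := by positivity
  refine ⟨?_, ?_, ?_, fun i => ?_⟩
  · simp only [tpFlagParam, Matrix.cons_val]
    field_simp
  · simp only [tpFlagParam, Matrix.cons_val]
    field_simp
  · simp only [tpFlagParam, Matrix.cons_val]
    field_simp
    ring
  · fin_cases i <;> simp only [tpFlagParam, Fin.zero_eta, Fin.mk_one, Fin.reduceFinMk,
    Matrix.cons_val] <;> positivity

theorem tpFlagCoords_tpFlagParam {a b c : ℝ} (ha : 0 < a) (hb : 0 < b) (hc : 0 < c) :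
    tpFlagCoords (tpFlagParam a b c) = (a, b, c) := by
  have hD : 1 + (a + c) + b * c ≠ 0 := by positivity
  have hE : a * b + b + 1 ≠ 0 := by positivity
  simp only [tpFlagCoords, tpFlagParam, Matrix.cons_val, Prod.mk.injEq]
  refine ⟨?_, ?_, ?_⟩ <;> field_simp

theorem tpFlagCoords_pos {x : EuclideanSpace ℝ (Fin 6)} (hx : ∀ i, 0 < x i) :
    0 < (tpFlagCoords x).1 ∧ 0 < (tpFlagCoords x).2.1 ∧ 0 < (tpFlagCoords x).2.2 := by
  have := hx 0; have := hx 2; have := hx 3; have := hx 4; have := hx 5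
  simp only [tpFlagCoords]
  exact ⟨by positivity, by positivity, by positivity⟩

theorem tpFlagParam_eq_of_ratios {a b c : ℝ} {x : EuclideanSpace ℝ (Fin 6)}
    (hv : x 0 + x 1 + x 2 = 1) (hw : x 3 + x 4 + x 5 = 1) (h0 : x 0 ≠ 0) (h5 : x 5 ≠ 0)
    (hac : a + c = x 1 / x 0) (hbc : b * c = x 2 / x 0) (hab : a * b = x 3 / x 5)
    (hb : b = x 4 / x 5) : tpFlagParam a b c = x := by
  have hD : 1 + (a + c) + b * c = 1 / x 0 := by
    rw [hac, hbc]; field_simp; linear_combination hv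
  have hE : a * b + b + 1 = 1 / x 5 := by
    rw [hab, hb]; field_simp; linear_combination hw
  unfold tpFlagParam
  rw [hD, hE, hac, hbc, hab, hb]
  ext i
  fin_cases i <;> simp only [Fin.zero_eta, Fin.mk_one, Fin.reduceFinMk,
    Matrix.cons_val] <;> field_simp

theorem tpFlagParam_tpFlagCoords {x : EuclideanSpace ℝ (Fin 6)} (hx : x ∈ totallyPositiveFlags) :
    tpFlagParam (tpFlagCoords x).1 (tpFlagCoords x).2.1 (tpFlagCoords x).2.2 = x := by
  obtain ⟨hv, hw, hvw, hpos⟩ := hx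
  have h0 := (hpos 0).ne'; have h4 := (hpos 4).ne'; have h5 := (hpos 5).ne'
  refine tpFlagParam_eq_of_ratios hv hw h0 h5 ?_ ?_ ?_ rfl <;> simp only [tpFlagCoords] <;> field_simp
  linear_combination hvw

theorem tpFlagParam_injective_and_image :
    (∀ a b c a' b' c' : ℝ, 0 < a → 0 < b → 0 < c → 0 < a' → 0 < b' → 0 < c' →
      tpFlagParam a b c = tpFlagParam a' b' c' → a = a' ∧ b = b' ∧ c = c') ∧
    {x | ∃ a b c : ℝ, 0 < a ∧ 0 < b ∧ 0 < c ∧ tpFlagParam a b c = x} =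
      {x : EuclideanSpace ℝ (Fin 6) | x 0 + x 1 + x 2 = 1 ∧ x 3 + x 4 + x 5 = 1 ∧
        x 0 * x 3 - x 1 * x 4 + x 2 * x 5 = 0 ∧ ∀ i, 0 < x i} := by
  refine ⟨fun a b c a' b' c' ha hb hc ha' hb' hc' h => ?_, Set.ext fun x => ⟨?_, fun hx => ?_⟩⟩
  · simpa [tpFlagCoords_tpFlagParam ha hb hc, tpFlagCoords_tpFlagParam ha' hb' hc'] using
      congrArg tpFlagCoords h
  · rintro ⟨a, b, c, ha, hb, hc, rfl⟩
    exact tpFlagParam_mem_totallyPositiveFlags ha hb hc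
  · obtain ⟨ha, hb, hc⟩ := tpFlagCoords_pos hx.2.2.2
    exact ⟨_, _, _, ha, hb, hc, tpFlagParam_tpFlagCoords hx⟩
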